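/- Let n be a prime, M = {z ∈ ℤⁿ : Σ z_i = 0}, and σ the cyclic shift. The group of σ-invariant homomorphisms κ : M → ℂˣ is cyclic of order n; explicitly, the map κ ↦ κ(e₀ − e₁) is a group isomorphism onto the group μ_n of n-th roots of unity in ℂˣ. -/

import Mathlib

/-- Weight homomorphism `z ↦ ∑ i • z i`. -/
def wt (n : ℕ) : (Fin n → ℤ) →+ ℤ where
  toFun z := ∑ i : Fin n, (i : ℤ) * z i
  map_zero' := by simp
  map_add' a b := by simp [mul_add, Finset.sum_add_distrib]

lemma wt_apply (n : ℕ) (z : Fin n → ℤ) : wt n z = ∑ i : Fin n, (i : ℤ) * z i := rfl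

lemma coe_sub_one_int (n : ℕ) [NeZero n] (j : Fin n) :
    ((j - 1 : Fin n) : ℤ) = (j : ℤ) - 1 + (if j = 0 then (n : ℤ) else 0) := by
  obtain ⟨m, rfl⟩ : ∃ m, n = m + 1 := ⟨n - 1, (Nat.succ_pred_eq_of_pos (Nat.pos_of_ne_zero (NeZero.ne _))).symm⟩
  rcases eq_or_ne j 0 with rfl | hj
  · simp [Fin.coe_sub_one]
  · have hv : j.val ≠ 0 := fun h => hj (Fin.ext h)
    simp [Fin.coe_sub_one, hj, Int.ofNat_sub (Nat.one_le_iff_ne_zero.2 hv)]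

lemma wt_shift (n : ℕ) [NeZero n] (z : Fin n → ℤ) :
    wt n (fun i => z (i + 1)) = wt n z - (∑ i, z i) + n * z 0 := by
  have h1 : wt n (fun i => z (i + 1)) = ∑ j : Fin n, ((j - 1 : Fin n) : ℤ) * z j := by
    rw [wt_apply]
    exact Fintype.sum_equiv (Equiv.addRight (1 : Fin n)) _ _
      (fun i => by simp)
  rw [h1]
  have h2 : ∀ j : Fin n, ((j - 1 : Fin n) : ℤ) * z j
      = ((j : ℤ) * z j - z j) + (if j = 0 then (n : ℤ) * z j else 0) := by
    intro j
    rw [coe_sub_one_int]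
    rcases eq_or_ne j 0 with rfl | hj
    · simp only [if_pos rfl]; push_cast; ring
    · simp only [if_neg hj, add_zero]; ring
  simp only [h2, Finset.sum_add_distrib, Finset.sum_sub_distrib, Finset.sum_ite_eq',
    Finset.mem_univ, if_true, wt_apply]





/-- The lattice `M = {z ∈ ℤⁿ : z₀ + ⋯ + z_{n-1} = 0}`. -/
def sumZero (n : ℕ) : AddSubgroup (Fin n → ℤ) where
  carrier := {z | ∑ i, z i = 0}
  zero_mem' := by simp
  add_mem' := by
    intro a b ha hb
    simp only [Set.mem_setOf_eq, Pi.add_apply, Finset.sum_add_distrib] at *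
    simp [ha, hb]
  neg_mem' := by
    intro a ha
    simp only [Set.mem_setOf_eq, Pi.neg_apply, Finset.sum_neg_distrib] at *
    simp [ha]

/-- The cyclic shift `(σz)_i = z_{i+1}` on `ℤⁿ`. -/
def shiftFun (n : ℕ) [NeZero n] : (Fin n → ℤ) →+ (Fin n → ℤ) where
  toFun z := fun i => z (i + 1)
  map_zero' := rfl
  map_add' _ _ := rfl

lemma shift_mem_sumZero (n : ℕ) [NeZero n] (z : Fin n → ℤ) (hz : z ∈ sumZero n) :
    shiftFun n z ∈ sumZero n := by
  simpa [sumZero, shiftFun, Fintype.sum_equiv (Equiv.addRight (1 : Fin n))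
    (fun i => z (i + 1)) z (fun i => rfl)] using hz

/-- The cyclic shift as an endomorphism of `M`. -/
def shiftM (n : ℕ) [NeZero n] : sumZero n →+ sumZero n :=
  AddMonoidHom.codRestrict ((shiftFun n).comp (sumZero n).subtype) (sumZero n)
    (fun z => shift_mem_sumZero n z.1 z.2)

lemma eDiff_mem (n : ℕ) [DecidableEq (Fin n)] (i j : Fin n) :
    (Pi.single i 1 - Pi.single j 1 : Fin n → ℤ) ∈ sumZero n := by
  simp [sumZero, Finset.sum_sub_distrib]

/-- The element `e_i - e_j` of `M`. -/
def eDiff (n : ℕ) [DecidableEq (Fin n)] (i j : Fin n) : sumZero n :=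
  ⟨Pi.single i 1 - Pi.single j 1, eDiff_mem n i j⟩


/-- The group of shift-invariant characters `κ : M → ℂˣ`. -/
def invChars (n : ℕ) [NeZero n] : Subgroup (AddChar (sumZero n) ℂˣ) where
  carrier := {κ | ∀ z : sumZero n, κ (shiftM n z) = κ z}
  one_mem' := by intro z; simp
  mul_mem' := by
    intro a b ha hb z
    simp [AddChar.mul_apply, ha z, hb z]
  inv_mem' := by
    intro κ hκ z
    rw [AddChar.inv_apply, AddChar.inv_apply, ← map_neg (shiftM n) z, hκ]

lemma eDiff_coe (n : ℕ) (i j : Fin n) :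
    (eDiff n i j : Fin n → ℤ) = Pi.single i 1 - Pi.single j 1 := rfl

/-- The character attached to an `n`-th root of unity. -/
noncomputable def chi (n : ℕ) (ζ : ℂˣ) : AddChar (sumZero n) ℂˣ where
  toFun z := ζ ^ (-(wt n z.1))
  map_zero_eq_one' := by simp
  map_add_eq_mul' a b := by
    simp only [AddSubgroup.coe_add, map_add, neg_add, zpow_add]

lemma chi_mem_invChars (n : ℕ) [NeZero n] (ζ : ℂˣ) (hζ : ζ ^ n = 1) :
    chi n ζ ∈ invChars n := by
  intro z
  show ζ ^ (-(wt n (fun i => z.1 (i + 1)))) = ζ ^ (-(wt n z.1))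
  rw [wt_shift, z.2, sub_zero]
  rw [neg_add, zpow_add, mul_comm]
  have h1 : ζ ^ (-((n:ℤ) * z.1 0)) = 1 := by
    rw [show -((n:ℤ) * z.1 0) = (n:ℤ) * (-(z.1 0)) by ring, zpow_mul, zpow_natCast, hζ,
      one_zpow]
  rw [h1, one_mul]

lemma wt_single (n : ℕ) (j : Fin n) : wt n (Pi.single j 1) = (j : ℤ) := by
  rw [wt_apply]
  simp [Pi.single_apply]

lemma chi_eDiff01 (n : ℕ) [NeZero n] (hn : 1 < n) (ζ : ℂˣ) :
    chi n ζ (eDiff n 0 1) = ζ := by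
  show ζ ^ (-(wt n (eDiff n 0 1 : Fin n → ℤ))) = ζ
  rw [eDiff_coe, map_sub, wt_single, wt_single]
  have h0 : ((0 : Fin n) : ℤ) = 0 := by simp
  have h1 : ((1 : Fin n) : ℤ) = 1 := by
    have : (1 : Fin n).val = 1 := by rw [Fin.val_one', Nat.mod_eq_of_lt hn]
    exact_mod_cast this
  rw [h0, h1]
  norm_num


lemma shift_eDiff (n : ℕ) [NeZero n] (i j : Fin n) :
    shiftM n (eDiff n (i + 1) (j + 1)) = eDiff n i j := by
  apply Subtype.ext
  funext k
  show (Pi.single (i+1) 1 - Pi.single (j+1) 1 : Fin n → ℤ) (k + 1)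
      = (Pi.single i 1 - Pi.single j 1 : Fin n → ℤ) k
  simp [Pi.single_apply, add_left_inj]

lemma kappa_shift (n : ℕ) [NeZero n] {κ : AddChar (sumZero n) ℂˣ} (hκ : κ ∈ invChars n)
    (i j : Fin n) : κ (eDiff n (i + 1) (j + 1)) = κ (eDiff n i j) := by
  rw [← shift_eDiff n i j]
  exact (hκ _).symm

open Fin.NatCast in
lemma kappa_step (n : ℕ) [NeZero n] {κ : AddChar (sumZero n) ℂˣ} (hκ : κ ∈ invChars n)
    (k : ℕ) : κ (eDiff n (k : Fin n) ((k : Fin n) + 1)) = κ (eDiff n 0 1) := by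
  induction k with
  | zero => norm_num
  | succ m ih =>
      have hc : ((m + 1 : ℕ) : Fin n) = (m : Fin n) + 1 := by push_cast; ring
      rw [hc, kappa_shift n hκ, ih]

lemma eDiff_add (n : ℕ) (i j k : Fin n) :
    eDiff n i k = eDiff n i j + eDiff n j k := by
  apply Subtype.ext
  show (Pi.single i 1 - Pi.single k 1 : Fin n → ℤ)
      = (Pi.single i 1 - Pi.single j 1) + (Pi.single j 1 - Pi.single k 1)
  abel

open Fin.NatCast in
lemma kappa_pow (n : ℕ) [NeZero n] {κ : AddChar (sumZero n) ℂˣ} (hκ : κ ∈ invChars n)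
    (k : ℕ) : κ (eDiff n 0 (k : Fin n)) = κ (eDiff n 0 1) ^ k := by
  induction k with
  | zero =>
      have : eDiff n 0 ((0 : ℕ) : Fin n) = 0 := by
        apply Subtype.ext
        show (Pi.single 0 1 - Pi.single ((0:ℕ):Fin n) 1 : Fin n → ℤ) = 0
        norm_num
      rw [this, pow_zero, AddChar.map_zero_eq_one]
  | succ m ih =>
      have hc : ((m + 1 : ℕ) : Fin n) = (m : Fin n) + 1 := by push_cast; ring
      rw [hc, eDiff_add n 0 (m : Fin n) ((m : Fin n) + 1), AddChar.map_add_eq_mul, ih,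
        kappa_step n hκ, pow_succ]

open Fin.NatCast in
lemma kappa_root (n : ℕ) [NeZero n] {κ : AddChar (sumZero n) ℂˣ} (hκ : κ ∈ invChars n) :
    κ (eDiff n 0 1) ^ n = 1 := by
  rw [← kappa_pow n hκ n]
  have : ((n : ℕ) : Fin n) = 0 := by simp
  rw [this]
  have h0 : eDiff n 0 (0 : Fin n) = 0 := by
    apply Subtype.ext
    show (Pi.single 0 1 - Pi.single 0 1 : Fin n → ℤ) = 0
    norm_num
  rw [h0, AddChar.map_zero_eq_one]

lemma addChar_map_sum {ι A M : Type*} [AddCommGroup A] [CommGroup M] (κ : AddChar A M)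
    (s : Finset ι) (f : ι → A) : κ (∑ i ∈ s, f i) = ∏ i ∈ s, κ (f i) := by
  classical
  induction s using Finset.cons_induction with
  | empty => simp
  | cons a s ha ih => rw [Finset.sum_cons, Finset.prod_cons, AddChar.map_add_eq_mul, ih]

lemma sumZero_decomp (n : ℕ) [NeZero n] (z : sumZero n) :
    z = ∑ i : Fin n, (z : Fin n → ℤ) i • eDiff n i 0 := by
  apply Subtype.ext
  have hcoe : ((∑ i : Fin n, (z : Fin n → ℤ) i • eDiff n i 0 : sumZero n) : Fin n → ℤ)
      = ∑ i : Fin n, (z : Fin n → ℤ) i • (Pi.single i 1 - Pi.single 0 1 : Fin n → ℤ) := by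
    rw [show ((∑ i : Fin n, (z : Fin n → ℤ) i • eDiff n i 0 : sumZero n) : Fin n → ℤ)
      = (sumZero n).subtype (∑ i : Fin n, (z : Fin n → ℤ) i • eDiff n i 0) from rfl,
      map_sum]
    rfl
  rw [hcoe]
  funext k
  rw [Finset.sum_apply]
  have : ∀ i : Fin n, ((z : Fin n → ℤ) i • (Pi.single i 1 - Pi.single 0 1 : Fin n → ℤ)) k
      = (if k = i then (z : Fin n → ℤ) i else 0) - (if k = 0 then (z : Fin n → ℤ) i else 0) := by
    intro i
    simp [Pi.single_apply, mul_sub]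
  simp only [this, Finset.sum_sub_distrib, Finset.sum_ite_eq, Finset.mem_univ, if_true]
  have hz : ∑ i, (z : Fin n → ℤ) i = 0 := z.2
  rcases eq_or_ne k 0 with rfl | hk
  · simp [hz]
  · simp [hk]

lemma kappa_eq_one (n : ℕ) [NeZero n] {κ : AddChar (sumZero n) ℂˣ} (hκ : κ ∈ invChars n)
    (h1 : κ (eDiff n 0 1) = 1) : κ = 1 := by
  ext z
  rw [sumZero_decomp n z, addChar_map_sum]
  have he : ∀ i : Fin n, κ (eDiff n i 0) = 1 := by
    intro i
    have hneg : eDiff n i 0 = -(eDiff n 0 i) := by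
      apply Subtype.ext
      show (Pi.single i 1 - Pi.single 0 1 : Fin n → ℤ) = -(Pi.single 0 1 - Pi.single i 1)
      abel
    rw [hneg, AddChar.map_neg_eq_inv]
    have : κ (eDiff n 0 i) = 1 := by
      have := kappa_pow n hκ i.val
      rw [Fin.cast_val_eq_self] at this
      rw [this, h1, one_pow]
    rw [this, inv_one]
  have : ∀ i : Fin n, κ ((z : Fin n → ℤ) i • eDiff n i 0) = 1 := by
    intro i
    rw [AddChar.map_zsmul_eq_zpow, he i, one_zpow]
  simp [this, AddChar.one_apply]

/-- For `n` prime, the group of shift-invariant characters `κ : M → ℂˣ` is cyclic of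
order `n`; explicitly, `κ ↦ κ(e₀ − e₁)` is a group isomorphism onto the group `μ_n` of
`n`-th roots of unity in `ℂˣ`. -/
theorem stmt6 (n : ℕ) (hn : n.Prime) [NeZero n] :
    IsCyclic (invChars n) ∧ Nat.card (invChars n) = n ∧
      ∃ e : invChars n ≃* rootsOfUnity n ℂ,
        ∀ κ : invChars n, (e κ : ℂˣ) = (κ : AddChar (sumZero n) ℂˣ) (eDiff n 0 1) := by
  have hn1 : 1 < n := hn.one_lt
  let Φ : invChars n →* rootsOfUnity n ℂ :=
  { toFun := fun κ => ⟨κ.1 (eDiff n 0 1), (mem_rootsOfUnity n _).2 (kappa_root n κ.2)⟩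
    map_one' := by
      apply Subtype.ext
      show ((1 : invChars n) : AddChar (sumZero n) ℂˣ) (eDiff n 0 1) = 1
      simp [AddChar.one_apply]
    map_mul' := by
      intro a b
      apply Subtype.ext
      show ((a * b : invChars n) : AddChar (sumZero n) ℂˣ) (eDiff n 0 1) = _
      simp [AddChar.mul_apply] }
  have hinj : Function.Injective Φ := by
    intro a b hab
    have hab' : a.1 (eDiff n 0 1) = b.1 (eDiff n 0 1) := congrArg Subtype.val hab
    have hmem : a.1 * b.1⁻¹ ∈ invChars n := mul_mem a.2 (inv_mem b.2)
    have h1 : (a.1 * b.1⁻¹) (eDiff n 0 1) = 1 := by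
      rw [AddChar.mul_apply, AddChar.inv_apply', hab', mul_inv_cancel]
    have := kappa_eq_one n hmem h1
    have hval : a.1 = b.1 := by
      have h2 := mul_eq_one_iff_eq_inv.mp this
      rw [h2]; exact inv_inv (b : AddChar (sumZero n) ℂˣ)
    exact Subtype.ext hval
  have hsurj : Function.Surjective Φ := by
    intro ζ
    have hζ : (ζ : ℂˣ) ^ n = 1 := (mem_rootsOfUnity n _).1 ζ.2
    refine ⟨⟨chi n ζ.1, chi_mem_invChars n ζ.1 hζ⟩, ?_⟩
    apply Subtype.ext
    exact chi_eDiff01 n hn1 ζ.1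
  let e : invChars n ≃* rootsOfUnity n ℂ := MulEquiv.ofBijective Φ ⟨hinj, hsurj⟩
  refine ⟨isCyclic_of_surjective e.symm.toMonoidHom e.symm.surjective, ?_, e, fun κ => rfl⟩
  rw [Nat.card_congr e.toEquiv, Complex.card_rootsOfUnity]
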